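/- Let G be a finite simple graph and a, b two nonadjacent vertices of G with S_{a,b} ≠ ∅. Every edge e' of G with φ_G(e') < k_min((a,b)) is unaffected by inserting the edge (a,b): φ_{G+(a,b)}(e') = φ_G(e'). -/

import Mathlib

/-
Suppose a `k`-truss `H` of `G + (a,b)` containing `e'`, with `k > t := φ_G(e')`, uses the new
edge `ab`. Then `a` and `b` have a common neighbour `c` in `H`, and the edges `ac`, `bc` of all such
`c` have truss number at least `k_min((a,b)) > t`, so each lies in a `(t + 1)`-truss of `G`.
Delete `ab` from `H` and add every `(t + 1)`-truss of `G` meeting `H`. The result is connected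
(the path `a c b` replaces `ab`), and the only triangles of `H` that are lost, those through `ab`,
sit on edges `ac`, `bc` that now lie in a `(t + 1)`-truss. So it is a `(t + 1)`-truss of `G`
containing `e'`, a contradiction.
-/

open SimpleGraph

variable {V : Type*}

/-- `H` is a `k`-truss of `G`: a connected subgraph with at least one edge in which
every edge lies in at least `k - 2` triangles of `H` (i.e. the endpoints of every edge
have at least `k - 2` common neighbors in `H`). -/
def IsTruss (G : SimpleGraph V) (k : ℕ) (H : G.Subgraph) : Prop :=
  H.Connected ∧ H.edgeSet.Nonempty ∧
    ∀ a b : V, H.Adj a b → k - 2 ≤ {c : V | H.Adj a c ∧ H.Adj b c}.ncard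

/-- The truss number `φ_G(e)` of an edge `e`: the largest `k` such that `e` lies in some
`k`-truss of `G`. -/
noncomputable def trussNumber (G : SimpleGraph V) (e : Sym2 V) : ℕ :=
  sSup {k : ℕ | ∃ H : G.Subgraph, IsTruss G k H ∧ e ∈ H.edgeSet}

/-- The support of the edge `(a, b)` in a subgraph `H`: the number of triangles of `H`
containing it, i.e. the number of common neighbors of `a` and `b` in `H`. -/
noncomputable def suppIn {G : SimpleGraph V} (H : G.Subgraph) (a b : V) : ℕ :=
  {c : V | H.Adj a c ∧ H.Adj b c}.ncard

/-- The support of the edge `(a, b)` in `G`. -/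
noncomputable def suppG (G : SimpleGraph V) (a b : V) : ℕ :=
  {c : V | G.Adj a c ∧ G.Adj b c}.ncard

/-- `S_{a,b}`: the common neighbors of `a` and `b` in `G`. -/
def commonNbrs (G : SimpleGraph V) (a b : V) : Set V :=
  {c : V | G.Adj a c ∧ G.Adj b c}

/-- `E_{S_{a,b} ↔ {a,b}}`: the edges of `G` joining a common neighbor of `a` and `b`
to `a` or to `b`. -/
def sideEdges (G : SimpleGraph V) (a b : V) : Set (Sym2 V) :=
  {e | ∃ c, G.Adj a c ∧ G.Adj b c ∧ (e = s(a, c) ∨ e = s(b, c))}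

/-- `k_min((a,b))`: minimum truss number among the edges of `E_{S_{a,b} ↔ {a,b}}`. -/
noncomputable def kmin (G : SimpleGraph V) (a b : V) : ℕ :=
  sInf (trussNumber G '' sideEdges G a b)

/-- `k_max((a,b))`: maximum truss number among the edges of `E_{S_{a,b} ↔ {a,b}}`. -/
noncomputable def kmax (G : SimpleGraph V) (a b : V) : ℕ :=
  sSup (trussNumber G '' sideEdges G a b)

/-- `G + (a,b)`: the graph obtained from `G` by inserting the edge `(a, b)`. -/
def insertEdge (G : SimpleGraph V) (a b : V) : SimpleGraph V :=
  G ⊔ fromEdgeSet {s(a, b)}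

namespace SimpleGraph

theorem Reachable.of_forall_adj {V' : Type*} {G : SimpleGraph V} {G' : SimpleGraph V'}
    (f : V → V') (h : ∀ u v, G.Adj u v → G'.Reachable (f u) (f v)) {u v : V}
    (huv : G.Reachable u v) : G'.Reachable (f u) (f v) := by
  rw [reachable_iff_reflTransGen] at huv ⊢
  exact huv.lift' f fun x y hxy => (reachable_iff_reflTransGen _ _).1 (h x y hxy)

namespace Subgraph

variable {G : SimpleGraph V}

theorem Connected.deleteEdges_of_adj_of_adj {H : G.Subgraph} (hH : H.Connected) {a b c : V}
    (hac : H.Adj a c) (hbc : H.Adj b c) : (H.deleteEdges {s(a, b)}).Connected := by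
  rw [Subgraph.connected_iff', connected_iff] at hH ⊢
  refine ⟨fun u v => ?_, hH.2⟩
  refine Reachable.of_forall_adj (G' := (H.deleteEdges {s(a, b)}).coe) (fun x => ⟨x.1, x.2⟩)
    (fun ⟨x, hx⟩ ⟨y, hy⟩ hxy => ?_) (hH.1 ⟨u.1, u.2⟩ ⟨v.1, v.2⟩)
  by_cases hne : s(x, y) = s(a, b)
  · have hc : c ∈ H.verts := H.edge_vert hac.symm
    have hca : c ≠ a := (Subgraph.Adj.ne hac).symm
    have hcb : c ≠ b := (Subgraph.Adj.ne hbc).symm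
    have hac' : (H.deleteEdges {s(a, b)}).coe.Adj ⟨a, H.edge_vert hac⟩ ⟨c, hc⟩ :=
      ⟨hac, by simp [hca, hcb]⟩
    have hcb' : (H.deleteEdges {s(a, b)}).coe.Adj ⟨c, hc⟩ ⟨b, H.edge_vert hbc⟩ :=
      ⟨hbc.symm, by simp [hca, hcb]⟩
    have hab := hac'.reachable.trans hcb'.reachable
    rcases Sym2.eq_iff.1 hne with ⟨rfl, rfl⟩ | ⟨rfl, rfl⟩
    exacts [hab, hab.symm]
  · exact Adj.reachable (show H.Adj x y ∧ _ from ⟨hxy, hne⟩)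

theorem Connected.sup_sSup {H : G.Subgraph} {𝒦 : Set G.Subgraph} (hH : H.Connected)
    (h𝒦 : ∀ K ∈ 𝒦, K.Connected ∧ (K.verts ∩ H.verts).Nonempty) : (H ⊔ sSup 𝒦).Connected := by
  obtain ⟨h₀, hh₀⟩ := hH.nonempty
  rw [Subgraph.connected_iff', connected_iff_exists_forall_reachable]
  refine ⟨⟨h₀, Or.inl hh₀⟩, ?_⟩
  have hbase : ∀ w (hw : w ∈ H.verts),
      (H ⊔ sSup 𝒦).coe.Reachable ⟨h₀, Or.inl hh₀⟩ ⟨w, Or.inl hw⟩ := fun w hw =>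
    (hH ⟨h₀, hh₀⟩ ⟨w, hw⟩).map (Subgraph.inclusion le_sup_left)
  rintro ⟨v, hv | hv⟩
  · exact hbase v hv
  · rw [verts_sSup, Set.mem_iUnion₂] at hv
    obtain ⟨K, hK, hvK⟩ := hv
    obtain ⟨hKc, w, hwK, hwH⟩ := h𝒦 K hK
    have hKle : K ≤ H ⊔ sSup 𝒦 := le_sup_of_le_right (le_sSup hK)
    exact (hbase w hwH).trans ((hKc ⟨w, hwK⟩ ⟨v, hvK⟩).map (Subgraph.inclusion hKle))

def transfer {G' : SimpleGraph V} (H : G.Subgraph) (h : ∀ ⦃x y⦄, H.Adj x y → G'.Adj x y) :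
    G'.Subgraph where
  verts := H.verts
  Adj := H.Adj
  adj_sub hxy := h hxy
  edge_vert := H.edge_vert
  symm := H.symm

theorem Connected.transfer {G' : SimpleGraph V} {H : G.Subgraph} (hH : H.Connected)
    (h : ∀ ⦃x y⦄, H.Adj x y → G'.Adj x y) : (H.transfer h).Connected :=
  ⟨hH.coe⟩

end Subgraph

end SimpleGraph

section Truss

variable {G G' : SimpleGraph V} {k m : ℕ} {H : G.Subgraph} {e : Sym2 V} {a b : V}

theorem IsTruss.transfer (hH : IsTruss G k H) (h : ∀ ⦃x y⦄, H.Adj x y → G'.Adj x y) :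
    IsTruss G' k (H.transfer h) :=
  ⟨hH.1.transfer h, hH.2.1, hH.2.2⟩

theorem IsTruss.of_le (hH : IsTruss G k H) (hmk : m ≤ k) : IsTruss G m H :=
  ⟨hH.1, hH.2.1, fun x y hxy => (Nat.sub_le_sub_right hmk 2).trans (hH.2.2 x y hxy)⟩

theorem exists_isTruss_two (he : e ∈ G.edgeSet) :
    ∃ H : G.Subgraph, IsTruss G 2 H ∧ e ∈ H.edgeSet := by
  induction e using Sym2.ind with | _ x y
  rw [mem_edgeSet] at he
  have hxy : s(x, y) ∈ (G.subgraphOfAdj he).edgeSet := by simp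
  exact ⟨_, ⟨Subgraph.subgraphOfAdj_connected he, ⟨_, hxy⟩, by simp⟩, hxy⟩

theorem bddAbove_trussSet [Finite V] (G : SimpleGraph V) (e : Sym2 V) :
    BddAbove {k | ∃ H : G.Subgraph, IsTruss G k H ∧ e ∈ H.edgeSet} := by
  refine ⟨Nat.card V + 2, ?_⟩
  rintro k ⟨H, ⟨-, ⟨e₀, he₀⟩, hsupp⟩, -⟩
  induction e₀ using Sym2.ind with | _ x y
  have := (hsupp x y he₀).trans (Set.ncard_le_card _)
  omega

theorem le_trussNumber [Finite V] (hH : IsTruss G k H) (he : e ∈ H.edgeSet) :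
    k ≤ trussNumber G e :=
  le_csSup (bddAbove_trussSet G e) ⟨H, hH, he⟩

theorem two_le_trussNumber [Finite V] (he : e ∈ G.edgeSet) : 2 ≤ trussNumber G e :=
  let ⟨_, hH, heH⟩ := exists_isTruss_two he
  le_trussNumber hH heH

theorem exists_isTruss_trussNumber [Finite V] (he : e ∈ G.edgeSet) :
    ∃ H : G.Subgraph, IsTruss G (trussNumber G e) H ∧ e ∈ H.edgeSet :=
  Nat.sSup_mem ⟨2, exists_isTruss_two he⟩ (bddAbove_trussSet G e)

theorem exists_isTruss_of_le_trussNumber [Finite V] (he : e ∈ G.edgeSet)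
    (hk : k ≤ trussNumber G e) : ∃ H : G.Subgraph, IsTruss G k H ∧ e ∈ H.edgeSet :=
  let ⟨H, hH, heH⟩ := exists_isTruss_trussNumber he
  ⟨H, hH.of_le hk, heH⟩

theorem trussNumber_mono [Finite V] (hle : G ≤ G') (he : e ∈ G.edgeSet) :
    trussNumber G e ≤ trussNumber G' e :=
  let ⟨H, hH, heH⟩ := exists_isTruss_trussNumber he
  le_trussNumber (hH.transfer fun _ _ hxy => hle (H.adj_sub hxy)) heH

theorem suppIn_le_suppIn [Finite V] {K : G'.Subgraph} {x y : V}
    (h : ∀ c, H.Adj x c → H.Adj y c → K.Adj x c ∧ K.Adj y c) : suppIn H x y ≤ suppIn K x y :=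
  Set.ncard_le_ncard (fun c hc => h c hc.1 hc.2)

theorem sideEdges_subset_edgeSet : sideEdges G a b ⊆ G.edgeSet := by
  rintro e ⟨c, hac, hbc, rfl | rfl⟩
  exacts [hac, hbc]

theorem kmin_le_trussNumber (he : e ∈ sideEdges G a b) : kmin G a b ≤ trussNumber G e :=
  csInf_le (OrderBot.bddBelow _) ⟨e, he, rfl⟩

theorem le_insertEdge (G : SimpleGraph V) (a b : V) : G ≤ insertEdge G a b :=
  le_sup_left

theorem adj_of_adj_insertEdge {x y : V} (h : (insertEdge G a b).Adj x y)
    (hne : s(x, y) ≠ s(a, b)) : G.Adj x y := by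
  simpa [insertEdge, hne] using h

theorem SimpleGraph.Subgraph.adj_of_adj_of_not_adj_insertEdge {H : (insertEdge G a b).Subgraph}
    {x y : V} (hxy : H.Adj x y) (hab : ¬H.Adj a b) : G.Adj x y :=
  adj_of_adj_insertEdge (H.adj_sub hxy) fun hxy_ab =>
    hab (H.mem_edgeSet.1 (hxy_ab ▸ H.mem_edgeSet.2 hxy))

theorem SimpleGraph.Subgraph.mem_sideEdges_of_adj_insertEdge {H : (insertEdge G a b).Subgraph}
    {x y c : V} (hxy : H.Adj x y) (hxc : H.Adj x c) (hyc : H.Adj y c) (hxc_ab : s(x, c) = s(a, b)) :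
    s(x, y) ∈ sideEdges G a b := by
  have hG : ∀ ⦃u v⦄, H.Adj u v → s(u, v) ≠ s(a, b) → G.Adj u v := fun _ _ huv =>
    adj_of_adj_insertEdge (H.adj_sub huv)
  rcases Sym2.eq_iff.1 hxc_ab with ⟨rfl, rfl⟩ | ⟨rfl, rfl⟩
  · refine ⟨y, hG hxy ?_, hG hyc.symm ?_, Or.inl rfl⟩ <;> simp [hxy.ne.symm, hxc.ne, hyc.ne]
  · refine ⟨y, hG hyc.symm ?_, hG hxy ?_, Or.inr rfl⟩ <;> simp [hxy.ne.symm, hxc.ne, hyc.ne]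

end Truss

theorem exists_isTruss_of_isTruss_insertEdge [Finite V] {G : SimpleGraph V} {a b : V} {k : ℕ}
    (hk : 3 ≤ k) {H : (insertEdge G a b).Subgraph} (hH : IsTruss _ k H) (hab : H.Adj a b)
    (hside : ∀ e ∈ sideEdges G a b, ∃ K : G.Subgraph, IsTruss G k K ∧ e ∈ K.edgeSet) :
    ∃ B : G.Subgraph, IsTruss G k B ∧ H.edgeSet \ {s(a, b)} ⊆ B.edgeSet := by
  obtain ⟨hHconn, -, hHsupp⟩ := hH
  obtain ⟨c₀, hac₀, hbc₀⟩ : ∃ c, H.Adj a c ∧ H.Adj b c :=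
    Set.nonempty_of_ncard_ne_zero (s := {c | H.Adj a c ∧ H.Adj b c})
      (by have := hHsupp a b hab; omega)
  let D : G.Subgraph := (H.deleteEdges {s(a, b)}).transfer fun _ _ hxy =>
    adj_of_adj_insertEdge (H.adj_sub hxy.1) hxy.2
  let 𝒦 : Set G.Subgraph := {K | IsTruss G k K ∧ (K.verts ∩ H.verts).Nonempty}
  let B := D ⊔ sSup 𝒦
  have hDB : ∀ ⦃x y⦄, H.Adj x y → s(x, y) ≠ s(a, b) → B.Adj x y := fun _ _ hxy hne =>
    Or.inl ⟨hxy, hne⟩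
  have h𝒦B : ∀ K ∈ 𝒦, K ≤ B := fun K hK => le_sup_of_le_right (le_sSup hK)
  have hside𝒦 : ∀ ⦃x y c⦄, H.Adj x y → H.Adj x c → H.Adj y c → s(x, c) = s(a, b) →
      ∃ K ∈ 𝒦, K.Adj x y := by
    intro x y c hxy hxc hyc hxc_ab
    obtain ⟨K, hK, hxyK⟩ := hside _ (H.mem_sideEdges_of_adj_insertEdge hxy hxc hyc hxc_ab)
    exact ⟨K, ⟨hK, x, K.edge_vert hxyK, H.edge_vert hxy⟩, hxyK⟩
  have hBsupp : ∀ x y, B.Adj x y → k - 2 ≤ suppIn B x y := by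
    have h𝒦supp : ∀ K ∈ 𝒦, ∀ x y, K.Adj x y → k - 2 ≤ suppIn B x y := fun K hK x y hxy =>
      (hK.1.2.2 x y hxy).trans
        (suppIn_le_suppIn fun _ hxc hyc => ⟨(h𝒦B K hK).2 hxc, (h𝒦B K hK).2 hyc⟩)
    rintro x y (⟨hxy, -⟩ | hxy)
    · by_cases hK : ∃ K ∈ 𝒦, K.Adj x y
      · obtain ⟨K, hK, hxyK⟩ := hK
        exact h𝒦supp K hK x y hxyK
      -- a triangle of `H` through `ab` would make `xy` a side edge, hence an edge of some `K ∈ 𝒦`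
      · refine (hHsupp x y hxy).trans
          (suppIn_le_suppIn fun c hxc hyc => ⟨hDB hxc ?_, hDB hyc ?_⟩)
        · exact fun h => hK (hside𝒦 hxy hxc hyc h)
        · intro h
          obtain ⟨K, hK', hyxK⟩ := hside𝒦 hxy.symm hyc hxc h
          exact hK ⟨K, hK', hyxK.symm⟩
    · obtain ⟨K, hK, hxyK⟩ := Subgraph.sSup_adj.1 hxy
      exact h𝒦supp K hK x y hxyK
  have hBconn : B.Connected :=
    ((hHconn.deleteEdges_of_adj_of_adj hac₀ hbc₀).transfer _).sup_sSup fun K hK => ⟨hK.1.1, hK.2⟩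
  have hHB : H.edgeSet \ {s(a, b)} ⊆ B.edgeSet := by
    rintro e ⟨he, hne⟩
    induction e using Sym2.ind with | _ x y
    exact hDB he hne
  have hac₀_ne : s(a, c₀) ≠ s(a, b) := by simp [hac₀.ne.symm, hbc₀.ne.symm]
  exact ⟨B, ⟨hBconn, ⟨s(a, c₀), hHB ⟨hac₀, hac₀_ne⟩⟩, hBsupp⟩, hHB⟩

theorem stmt16_general [Fintype V] (G : SimpleGraph V) (a b : V)
    (hnadj : ¬ G.Adj a b)
    (e' : Sym2 V) (he' : e' ∈ G.edgeSet)
    (h : trussNumber G e' < kmin G a b) :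
    trussNumber (insertEdge G a b) e' = trussNumber G e' := by
  refine le_antisymm ?_ (trussNumber_mono (le_insertEdge G a b) he')
  obtain ⟨H, hH, he'H⟩ := exists_isTruss_trussNumber (edgeSet_mono (le_insertEdge G a b) he')
  by_cases hab : H.Adj a b
  · by_contra! hlt
    obtain ⟨B, hB, hHB⟩ := exists_isTruss_of_isTruss_insertEdge
      (Nat.succ_le_succ (two_le_trussNumber he')) (hH.of_le hlt) hab fun e he =>
        exists_isTruss_of_le_trussNumber (sideEdges_subset_edgeSet he)
          (h.trans_le (kmin_le_trussNumber he))
    have he'B : e' ∈ B.edgeSet :=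
      hHB ⟨he'H, fun he'ab => hnadj (by rwa [Set.mem_singleton_iff.1 he'ab] at he')⟩
    exact (le_trussNumber hB he'B).not_gt (Nat.lt_succ_self _)
  · exact le_trussNumber
      (hH.transfer fun _ _ hxy => H.adj_of_adj_of_not_adj_insertEdge hxy hab) he'H

theorem stmt16 [Fintype V] (G : SimpleGraph V) (a b : V) (hab : a ≠ b)
    (hnadj : ¬ G.Adj a b) (hS : (commonNbrs G a b).Nonempty)
    (e' : Sym2 V) (he' : e' ∈ G.edgeSet)
    (h : trussNumber G e' < kmin G a b) :
    trussNumber (insertEdge G a b) e' = trussNumber G e' :=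
  stmt16_general G a b hnadj e' he' h
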